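/- arXiv:2003.04245 — 3 statements merged into one kernel-verified Lean document; each statement's English description precedes it below -/
import Mathlib

section
/- Let T be a tree of finite strictly increasing sequences of natural numbers, and let φ : ℕ → ℕ be injective. Define the Solovay open set W_φ(T) = {f ∈ [ℕ]^ℕ : (∃ k, ∀ τ with |τ| = k and τ(i) ≤ f(i) for all i < k, τ ∉ T) and f(0), f(1) ∈ range(φ)}. If T has no infinite path, then W_φ(T) has a homogeneous solution landing in W_φ(T); moreover if φ is surjective then W_φ(T) = [ℕ]^ℕ. -/
/-! Bounding the entries by `f` leaves a finitely branching subtree of `T`, which by Kőnig's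
lemma is finite because `T` has no path; so some length `k` has no node of `T` bounded by `f`.
This holds for every `f`, and the range condition is met by the increasing enumeration of
`range φ`, which is infinite as `φ` is injective. -/

/-- The length-`k` initial segment of `f : ℕ → ℕ` as a list. -/
def initSeg (f : ℕ → ℕ) (k : ℕ) : List ℕ := List.ofFn (fun i : Fin k => f i)

/-- `f` is a path through the tree `T`. -/
def IsPath (T : Set (List ℕ)) (f : ℕ → ℕ) : Prop := ∀ k, initSeg f k ∈ T

/-- The Solovay open set `W_φ(T)`. -/
def SolovaySet (φ : ℕ → ℕ) (T : Set (List ℕ)) (f : ℕ → ℕ) : Prop :=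
  (∃ k, ∀ τ : List ℕ, τ.length = k →
      (∀ i (h : i < τ.length), τ.get ⟨i, h⟩ ≤ f i) → τ ∉ T) ∧
    f 0 ∈ Set.range φ ∧ f 1 ∈ Set.range φ

theorem exists_isPath_of_levels_finite {S : Set (List ℕ)}
    (hS : ∀ σ τ : List ℕ, σ <+: τ → τ ∈ S → σ ∈ S)
    (hfin : ∀ n, {σ ∈ S | σ.length = n}.Finite) (hne : ∀ n, ∃ σ ∈ S, σ.length = n) :
    ∃ x, IsPath S x := by
  -- Kőnig's lemma for the inverse system of the (finite) levels of `S` under truncation.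
  let α n := ↥{σ ∈ S | σ.length = n}
  have : ∀ n, Finite (α n) := fun n => (hfin n).to_subtype
  have : ∀ n, Nonempty (α n) := fun n => Set.Nonempty.to_subtype (hne n)
  obtain ⟨s, hs⟩ := exists_seq_forall_proj_of_forall_finite (α := α)
    (fun {i _} hij σ => ⟨σ.1.take i, hS _ _ (List.take_prefix _ _) σ.2.1, by simp [σ.2.2, hij]⟩)
    (fun i σ => Subtype.ext (List.take_of_length_le σ.2.2.le))
    (fun i j k hij _ σ => Subtype.ext (by simp [List.take_take, hij]))
    (fun _ _ => Set.toFinite _)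
  have hlen (n : ℕ) : (s n).1.length = n := (s n).2.2
  have hprefix {i j : ℕ} (hij : i ≤ j) : (s j).1.take i = (s i).1 := congrArg Subtype.val (hs hij)
  -- The default `0` is never read: `s (n + 1)` has length `n + 1`.
  refine ⟨fun n => (s (n + 1)).1.getD n 0, fun k => ?_⟩
  convert (s k).2.1
  refine List.ext_getElem (by simp [initSeg, hlen]) fun i hi hik => ?_
  simp only [initSeg, List.getElem_ofFn]
  rw [← hprefix (show i + 1 ≤ k by simp [initSeg] at hi; omega)]
  simp [List.getElem?_eq_getElem hik]

def BoundedBy (f : ℕ → ℕ) (τ : List ℕ) : Prop := ∀ i (h : i < τ.length), τ.get ⟨i, h⟩ ≤ f i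

theorem finite_setOf_length_eq_boundedBy (f : ℕ → ℕ) (n : ℕ) :
    {τ : List ℕ | τ.length = n ∧ BoundedBy f τ}.Finite := by
  refine ((Set.Finite.pi fun i : Fin n => Set.finite_Iic (f i)).image List.ofFn).subset ?_
  rintro τ ⟨rfl, hτ⟩
  exact ⟨fun i => τ[i], fun i _ => hτ i i.2, List.ofFn_getElem⟩

theorem BoundedBy.of_prefix {f : ℕ → ℕ} {σ τ : List ℕ} (hστ : σ <+: τ) (hτ : BoundedBy f τ) :
    BoundedBy f σ := by
  intro i hi
  simpa [hστ.getElem hi] using hτ i (hi.trans_le hστ.length_le)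

theorem exists_level_forall_not_mem_of_not_isPath {T : Set (List ℕ)}
    (hTree : ∀ σ τ : List ℕ, σ <+: τ → τ ∈ T → σ ∈ T) (hWF : ¬ ∃ x, IsPath T x) (f : ℕ → ℕ) :
    ∃ k, ∀ τ : List ℕ, τ.length = k → BoundedBy f τ → τ ∉ T := by
  by_contra! hlevels
  obtain ⟨x, hx⟩ := exists_isPath_of_levels_finite (S := {τ ∈ T | BoundedBy f τ})
    (fun σ τ hστ hτ => ⟨hTree σ τ hστ hτ.1, hτ.2.of_prefix hστ⟩)
    (fun n => (finite_setOf_length_eq_boundedBy f n).subset fun τ hτ => ⟨hτ.2, hτ.1.2⟩)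
    (fun n => (hlevels n).imp fun τ hτ => ⟨⟨hτ.2.2, hτ.2.1⟩, hτ.1⟩)
  exact hWF ⟨x, fun k => (hx k).1⟩

theorem solovaySet_of_mem_range {φ : ℕ → ℕ} {T : Set (List ℕ)}
    (hTree : ∀ σ τ : List ℕ, σ <+: τ → τ ∈ T → σ ∈ T) (hWF : ¬ ∃ x, IsPath T x) {f : ℕ → ℕ}
    (h0 : f 0 ∈ Set.range φ) (h1 : f 1 ∈ Set.range φ) : SolovaySet φ T f :=
  ⟨exists_level_forall_not_mem_of_not_isPath hTree hWF f, h0, h1⟩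

theorem stmt5_general (T : Set (List ℕ))
    (hTree : ∀ σ τ : List ℕ, σ <+: τ → τ ∈ T → σ ∈ T)
    (φ : ℕ → ℕ) (hφ : Function.Injective φ)
    (hWF : ¬ ∃ x : ℕ → ℕ, IsPath T x) :
    (∃ f : ℕ → ℕ, StrictMono f ∧
        ∀ g : ℕ → ℕ, StrictMono g → SolovaySet φ T (f ∘ g)) ∧
      (Function.Surjective φ →
        ∀ f : ℕ → ℕ, StrictMono f → SolovaySet φ T f) := by
  have hinf : (Set.range φ).Infinite := Set.infinite_range_of_injective hφ
  have hnth (n : ℕ) : Nat.nth (· ∈ Set.range φ) n ∈ Set.range φ := Nat.nth_mem_of_infinite hinf n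
  refine ⟨⟨Nat.nth (· ∈ Set.range φ), Nat.nth_strictMono hinf, fun g _ => ?_⟩, fun hsurj f _ => ?_⟩
  · exact solovaySet_of_mem_range hTree hWF (hnth _) (hnth _)
  · exact solovaySet_of_mem_range hTree hWF (hsurj _) (hsurj _)

theorem stmt5 (T : Set (List ℕ))
    (hTree : ∀ σ τ : List ℕ, σ <+: τ → τ ∈ T → σ ∈ T)
    (hInc : ∀ σ ∈ T, List.Chain' (· < ·) σ)
    (φ : ℕ → ℕ) (hφ : Function.Injective φ)
    (hWF : ¬ ∃ x : ℕ → ℕ, IsPath T x) :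
    (∃ f : ℕ → ℕ, StrictMono f ∧
        ∀ g : ℕ → ℕ, StrictMono g → SolovaySet φ T (f ∘ g)) ∧
      (Function.Surjective φ →
        ∀ f : ℕ → ℕ, StrictMono f → SolovaySet φ T f) :=
  stmt5_general T hTree φ hφ hWF
end

section
/- Let T be a tree of finite strictly increasing sequences of natural numbers and let φ : ℕ → ℕ be strictly increasing. Define the set D_φ(T) = {f ∈ [ℕ]^ℕ : ∃ σ₀, σ₁ ∈ T with f(0) = φ(⌜σ₀⌝), f(1) = φ(⌜σ₁⌝), and σ₀ a proper initial segment of σ₁}, where ⌜·⌝ is a fixed coding of finite sequences by natural numbers. If T has an infinite path then D_φ(T) has a homogeneous solution landing in it, and from any homogeneous solution f landing in D_φ(T) one obtains a path through T as x = ⋃_k φ^{-1}(f(k)) (the union of the coded finite sequences). If T has no infinite path then D_φ(T) has no homogeneous solution landing in it. -/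
def PrefixOf (σ : List ℕ) (x : ℕ → ℕ) : Prop :=
  ∀ i (h : i < σ.length), σ.get ⟨i, h⟩ = x i

def DSet (φ : ℕ → ℕ) (code : List ℕ → ℕ) (T : Set (List ℕ)) (f : ℕ → ℕ) : Prop :=
  ∃ σ₀ σ₁ : List ℕ, σ₀ ∈ T ∧ σ₁ ∈ T ∧
    f 0 = φ (code σ₀) ∧ f 1 = φ (code σ₁) ∧ σ₀ <+: σ₁ ∧ σ₀ ≠ σ₁

lemma initSeg_length (x : ℕ → ℕ) (k : ℕ) : (initSeg x k).length = k := by simp [initSeg]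

lemma initSeg_prefix (x : ℕ → ℕ) {a b : ℕ} (h : a ≤ b) : initSeg x a <+: initSeg x b := by
  have heq : initSeg x a = (initSeg x b).take a := by
    apply List.ext_getElem
    · simp [initSeg, h]
    · intro i h1 h2
      simp [initSeg]
  rw [heq]; exact List.take_prefix _ _

lemma exists_gt_of_injective (c : ℕ → ℕ) (hc : Function.Injective c) (N v : ℕ) :
    ∃ k, N < k ∧ v < c k := by
  by_contra h
  push_neg at h
  have himg : c '' Set.Ioi N ⊆ Set.Iic v := by rintro _ ⟨k, hk, rfl⟩; exact h k hk
  exact ((Set.Ioi_infinite N).image (hc.injOn)) ((Set.finite_Iic v).subset himg)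

lemma part2aux (T : Set (List ℕ))
    (hTree : ∀ σ τ : List ℕ, σ <+: τ → τ ∈ T → σ ∈ T)
    (φ : ℕ → ℕ) (hφ : StrictMono φ)
    (code : List ℕ → ℕ) (hcode : Function.Injective code)
    (f : ℕ → ℕ) (hD : ∀ g : ℕ → ℕ, StrictMono g → DSet φ code T (f ∘ g)) :
    ∃ x : ℕ → ℕ, IsPath T x ∧
      ∀ k, ∃ σ ∈ T, f k = φ (code σ) ∧ k ≤ σ.length ∧ PrefixOf σ x := by
  have key : ∀ k, ∃ σ₀ σ₁ : List ℕ, σ₀ ∈ T ∧ σ₁ ∈ T ∧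
      f k = φ (code σ₀) ∧ f (k+1) = φ (code σ₁) ∧ σ₀ <+: σ₁ ∧ σ₀ ≠ σ₁ := by
    intro k
    have hg : StrictMono (fun n => n + k) := fun a b h => Nat.add_lt_add_right h k
    obtain ⟨σ₀, σ₁, a1, a2, a3, a4, a5, a6⟩ := hD _ hg
    exact ⟨σ₀, σ₁, a1, a2, by simpa [Nat.add_comm] using a3,
      by simpa [Nat.add_comm] using a4, a5, a6⟩
  choose σ τ h1 h2 h3 h4 h5 h6 using key
  have hστ : ∀ k, τ k = σ (k+1) := fun k =>
    hcode (hφ.injective ((h4 k).symm.trans (h3 (k+1))))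
  have hpre : ∀ k, σ k <+: σ (k+1) := fun k => (hστ k) ▸ h5 k
  have hne : ∀ k, σ k ≠ σ (k+1) := fun k => (hστ k) ▸ h6 k
  have hlt : ∀ k, (σ k).length < (σ (k+1)).length := by
    intro k
    rcases Nat.lt_or_ge (σ k).length (σ (k+1)).length with h | h
    · exact h
    · exact absurd ((hpre k).eq_of_length (le_antisymm (hpre k).length_le h)) (hne k)
  have hlen : ∀ k, k ≤ (σ k).length := by
    intro k; induction k with
    | zero => exact Nat.zero_le _
    | succ n ih => exact Nat.lt_of_le_of_lt ih (hlt n)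
  have hmono : ∀ j k, j ≤ k → σ j <+: σ k := by
    intro j k h
    induction h with
    | refl => exact List.prefix_refl _
    | step h ih => exact ih.trans (hpre _)
  set x : ℕ → ℕ := fun i => (σ (i+1)).getD i 0 with hxdef
  have hx : ∀ k i (hi : i < (σ k).length), (σ k)[i] = x i := by
    intro k i hi
    have hi1 : i < (σ (i+1)).length := Nat.lt_of_lt_of_le (Nat.lt_succ_self i) (hlen (i+1))
    have hxe : x i = (σ (i+1))[i] := List.getD_eq_getElem _ _ hi1
    rw [hxe]
    rcases Nat.le_total k (i+1) with h | h
    · exact (hmono k (i+1) h).getElem hi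
    · exact ((hmono (i+1) k h).getElem hi1).symm
  refine ⟨x, ?_, ?_⟩
  · intro k
    have heq : initSeg x k = (σ k).take k := by
      apply List.ext_getElem
      · simp [initSeg, hlen k]
      · intro i hh1 hh2
        have hik : i < k := by simpa [initSeg] using hh1
        have hiσ : i < (σ k).length := Nat.lt_of_lt_of_le hik (hlen k)
        simp [initSeg, List.getElem_take, (hx k i hiσ).symm]
    rw [heq]
    exact hTree _ _ (List.take_prefix _ _) (h1 k)
  · intro k
    exact ⟨σ k, h1 k, h3 k, hlen k, fun i hi => by
      simpa [List.get_eq_getElem] using hx k i hi⟩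

theorem stmt7 (T : Set (List ℕ))
    (hTree : ∀ σ τ : List ℕ, σ <+: τ → τ ∈ T → σ ∈ T)
    (hInc : ∀ σ ∈ T, List.Chain' (· < ·) σ)
    (φ : ℕ → ℕ) (hφ : StrictMono φ)
    (code : List ℕ → ℕ) (hcode : Function.Injective code) :
    ((∃ x : ℕ → ℕ, IsPath T x) →
      ∃ f : ℕ → ℕ, StrictMono f ∧ ∀ g : ℕ → ℕ, StrictMono g → DSet φ code T (f ∘ g)) ∧
    (∀ f : ℕ → ℕ, StrictMono f → (∀ g : ℕ → ℕ, StrictMono g → DSet φ code T (f ∘ g)) →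
      ∃ x : ℕ → ℕ, IsPath T x ∧
        ∀ k, ∃ σ ∈ T, f k = φ (code σ) ∧ k ≤ σ.length ∧ PrefixOf σ x) ∧
    ((¬ ∃ x : ℕ → ℕ, IsPath T x) →
      ¬ ∃ f : ℕ → ℕ, StrictMono f ∧ ∀ g : ℕ → ℕ, StrictMono g → DSet φ code T (f ∘ g)) := by
  refine ⟨?_, fun f _ hD => part2aux T hTree φ hφ code hcode f hD, ?_⟩
  · rintro ⟨x, hx⟩
    set c : ℕ → ℕ := fun k => code (initSeg x k) with hc
    have hcinj : Function.Injective c := by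
      intro a b hab
      have := hcode hab
      have := congrArg List.length this
      simpa [initSeg_length] using this
    have hstep : ∀ m : ℕ, ∃ k, m < k ∧ c m < c k := fun m =>
      exists_gt_of_injective c hcinj m (c m)
    choose nxt hn1 hn2 using hstep
    set K : ℕ → ℕ := fun n => nxt^[n] 0 with hK
    have hKsucc : ∀ n, K (n+1) = nxt (K n) := fun n => Function.iterate_succ_apply' nxt n 0
    have hKmono : StrictMono K := strictMono_nat_of_lt_succ (fun n => by rw [hKsucc]; exact hn1 _)
    have hcKmono : StrictMono (fun n => c (K n)) :=
      strictMono_nat_of_lt_succ (fun n => by rw [hKsucc]; exact hn2 _)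
    refine ⟨fun n => φ (c (K n)), hφ.comp hcKmono, ?_⟩
    intro g hg
    refine ⟨initSeg x (K (g 0)), initSeg x (K (g 1)), hx _, hx _, rfl, rfl, ?_, ?_⟩
    · exact initSeg_prefix x (hKmono (hg Nat.zero_lt_one)).le
    · intro h
      have := congrArg List.length h
      simp only [initSeg_length] at this
      exact absurd this (hKmono (hg Nat.zero_lt_one)).ne
  · rintro hno ⟨f, hf, hD⟩
    obtain ⟨x, hx, -⟩ := part2aux T hTree φ hφ code hcode f hD
    exact hno ⟨x, hx⟩
end

section
/- Suppose every open subset of [ℕ]^ℕ is Ramsey and relativizes to subsequences (for every open P and f ∈ [ℕ]^ℕ there is a homogeneous h ⪯ f for P). Let T be a tree of strictly increasing sequences with [T] ≠ ∅ and let W = Solovay(T) be its Solovay open set (with φ the identity). Then every f ∈ [ℕ]^ℕ has a subsequence g such that g avoids W and hence dominates a path through T; in particular, for every f ∈ [ℕ]^ℕ there exist g ⪯ f and x ∈ [T] with x(i) ≤ g(i) for all i. -/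
/-- The Ramsey space: strictly increasing functions `ℕ → ℕ`. -/
def RamseySp : Set (ℕ → ℕ) := {f | StrictMono f}

/-- `P` is an open subset of the Ramsey space (subspace topology from Baire space). -/
def IsOpenIn (P : Set (ℕ → ℕ)) : Prop :=
  ∃ U : Set (ℕ → ℕ), IsOpen U ∧ P = U ∩ RamseySp

/-- `h` is a homogeneous solution for `P`. -/
def Homog (P : Set (ℕ → ℕ)) (h : ℕ → ℕ) : Prop :=
  StrictMono h ∧
    ((∀ g : ℕ → ℕ, StrictMono g → h ∘ g ∈ P) ∨ (∀ g : ℕ → ℕ, StrictMono g → h ∘ g ∉ P))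

/-- The Solovay open set with `φ = id` (the range condition is vacuous). -/
def SolovayId (T : Set (List ℕ)) (f : ℕ → ℕ) : Prop :=
  ∃ k, ∀ τ : List ℕ, τ.length = k →
    (∀ i (h : i < τ.length), τ.get ⟨i, h⟩ ≤ f i) → τ ∉ T

section Aux
open Classical

/-- A set defined by a condition on the first `k` values is open. -/
lemma solovay_open (T : Set (List ℕ)) : IsOpen {h : ℕ → ℕ | SolovayId T h} := by
  have : {h : ℕ → ℕ | SolovayId T h} =
      ⋃ k, (fun h : ℕ → ℕ => fun i : Fin k => h i) ⁻¹'
        {v : Fin k → ℕ | ∀ τ : List ℕ, (hτ : τ.length = k) →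
          (∀ i (hi : i < τ.length), τ.get ⟨i, hi⟩ ≤ v ⟨i, hτ ▸ hi⟩) → τ ∉ T} := by
    ext h
    simp only [Set.mem_setOf_eq, Set.mem_iUnion, Set.mem_preimage, SolovayId]
  rw [this]
  refine isOpen_iUnion fun k => ?_
  exact (isOpen_discrete _).preimage (continuous_pi fun i => continuous_apply _)

end Aux

theorem stmt17
    (ramseyRel : ∀ P : Set (ℕ → ℕ), IsOpenIn P → ∀ f : ℕ → ℕ, StrictMono f →
      ∃ g : ℕ → ℕ, StrictMono g ∧ Homog P (f ∘ g))
    (T : Set (List ℕ))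
    (hTree : ∀ σ τ : List ℕ, σ <+: τ → τ ∈ T → σ ∈ T)
    (hInc : ∀ σ ∈ T, List.Chain' (· < ·) σ)
    (hIll : ∃ x : ℕ → ℕ, IsPath T x) :
    ∀ f : ℕ → ℕ, StrictMono f → ∃ g : ℕ → ℕ, StrictMono g ∧
      (∀ h : ℕ → ℕ, StrictMono h → ¬ SolovayId T ((f ∘ g) ∘ h)) ∧
      ∃ x : ℕ → ℕ, IsPath T x ∧ ∀ i, x i ≤ f (g i) := by
  classical
  intro f hf
  set P : Set (ℕ → ℕ) := {h | SolovayId T h} ∩ RamseySp with hP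
  have hOpen : IsOpenIn P := ⟨{h | SolovayId T h}, solovay_open T, rfl⟩
  obtain ⟨g, hg, hfgmono, hcase⟩ := ramseyRel P hOpen f hf
  refine ⟨g, hg, ?_⟩
  -- the witness path x from hIll, and its strict monotonicity
  obtain ⟨y, hy⟩ := hIll
  have hymono : StrictMono y := by
    intro i j hij
    have h2 := hInc _ (hy (j + 1))
    replace h2 := List.isChain_iff_pairwise.mp h2
    have h3 := (List.pairwise_ofFn.mp h2) (i := ⟨i, by omega⟩) (j := ⟨j, by omega⟩) hij
    exact h3
  -- (f∘g)∘y is not in SolovayId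
  have hynot : ¬ SolovayId T ((f ∘ g) ∘ y) := by
    rintro ⟨k, hk⟩
    refine hk (initSeg y k) (by simp [initSeg]) ?_ (hy k)
    intro i hi
    have hi' : i < k := by simpa [initSeg] using hi
    have h1 : (initSeg y k).get ⟨i, hi⟩ = y i := by
      simp [initSeg, List.get_ofFn]
    rw [h1]
    calc y i ≤ f (g (y i)) := (hf.comp hg).le_apply
    _ = ((f ∘ g) ∘ y) i := rfl
  -- rule out the positive homogeneity case
  have h2 : ∀ h : ℕ → ℕ, StrictMono h → (f ∘ g) ∘ h ∉ P := by
    rcases hcase with h1 | h2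
    · exact absurd (h1 y hymono).1 hynot
    · exact h2
  have hmain : ∀ h : ℕ → ℕ, StrictMono h → ¬ SolovayId T ((f ∘ g) ∘ h) := by
    intro h hh hs
    exact h2 h hh ⟨hs, (hf.comp hg).comp hh⟩
  refine ⟨hmain, ?_⟩
  -- f ∘ g itself is not Solovay
  have hfgnot : ¬ SolovayId T (f ∘ g) := by
    have := hmain id strictMono_id
    simpa [Function.comp_id] using this
  -- unfold the negation
  have hAll : ∀ k, ∃ τ : List ℕ, τ.length = k ∧
      (∀ i (hi : i < τ.length), τ.get ⟨i, hi⟩ ≤ f (g i)) ∧ τ ∈ T := by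
    intro k
    by_contra hc
    push_neg at hc
    exact hfgnot ⟨k, fun τ hτ hd hT => hc τ hτ hd hT⟩
  -- dominated nodes
  set D : List ℕ → Prop :=
    fun τ => τ ∈ T ∧ ∀ i (hi : i < τ.length), τ.get ⟨i, hi⟩ ≤ f (g i) with hD
  have hDpre : ∀ σ τ : List ℕ, σ <+: τ → D τ → D σ := by
    rintro σ τ hpre ⟨hT, hdom⟩
    refine ⟨hTree σ τ hpre hT, fun i hi => ?_⟩
    have := hpre.getElem hi
    have hi' : i < τ.length := lt_of_lt_of_le hi hpre.length_le
    have h3 := hdom i hi'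
    simpa [List.get_eq_getElem, this] using h3
  set Ext : List ℕ → Prop :=
    fun σ => ∀ n, ∃ τ : List ℕ, τ.length = σ.length + n ∧ D τ ∧ σ <+: τ with hE
  have hExtD : ∀ σ, Ext σ → D σ := by
    intro σ hσ
    obtain ⟨τ, hlen, hDτ, hpre⟩ := hσ 0
    have : σ = τ := hpre.eq_of_length (by omega)
    rwa [this]
  have hExtNil : Ext [] := by
    intro n
    obtain ⟨τ, h1, h2, h3⟩ := hAll n
    exact ⟨τ, by simpa using h1, ⟨h3, h2⟩, List.nil_prefix⟩
  -- König step
  have hstep : ∀ σ, Ext σ → ∃ a : ℕ, Ext (σ ++ [a]) := by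
    intro σ hσ
    by_contra hc
    push_neg at hc
    have hc' : ∀ a : ℕ, ∃ n, ∀ τ : List ℕ,
        ¬(τ.length = (σ ++ [a]).length + n ∧ D τ ∧ (σ ++ [a]) <+: τ) := by
      intro a
      have this2 : ¬ ∀ n : ℕ, ∃ τ : List ℕ,
          τ.length = (σ ++ [a]).length + n ∧ D τ ∧ (σ ++ [a]) <+: τ := hc a
      push_neg at this2
      obtain ⟨n, hn⟩ := this2
      exact ⟨n, fun τ h => by
        obtain ⟨h1, h2, h3⟩ := h
        exact (hn τ h1 h2) h3⟩
    choose nn hnn using hc'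
    set B := f (g σ.length) with hB
    set N := (Finset.range (B + 1)).sup nn with hN
    obtain ⟨τ, hlen, hDτ, hpre⟩ := hσ (N + 1)
    have hslt : σ.length < τ.length := by omega
    set a := τ.get ⟨σ.length, hslt⟩ with ha
    have haB : a ≤ B := hDτ.2 σ.length hslt
    have hna : nn a ≤ N := Finset.le_sup (Finset.mem_range.mpr (by omega))
    -- σ ++ [a] is a prefix of τ
    have hσtake : σ = τ.take σ.length := by
      have := List.prefix_iff_eq_take.mp hpre
      simpa using this
    have hconc : σ ++ [a] = τ.take (σ.length + 1) := by
      rw [hσtake]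
      have := List.take_concat_get hslt
      simpa [List.concat_eq_append, ← hσtake, ha] using this
    have hpre1 : σ ++ [a] <+: τ := by
      rw [hconc]; exact List.take_prefix _ _
    -- the truncation of τ at length σ.length + 1 + nn a
    set τ' := τ.take (σ.length + 1 + nn a) with hτ'
    have hlen' : τ'.length = σ.length + 1 + nn a := by
      rw [hτ', List.length_take]; omega
    have hDτ' : D τ' := hDpre _ _ (List.take_prefix _ _) hDτ
    have hpre' : σ ++ [a] <+: τ' := by
      refine List.prefix_of_prefix_length_le hpre1 (List.take_prefix _ _) ?_
      rw [hlen']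
      simp only [List.length_append, List.length_singleton]
      omega
    exact hnn a τ' ⟨by simp [hlen'], hDτ', hpre'⟩
  choose step hstepspec using hstep
  -- build the branch
  let s : ℕ → {σ : List ℕ // Ext σ} := fun n =>
    Nat.rec ⟨[], hExtNil⟩ (fun _ p => ⟨p.1 ++ [step p.1 p.2], hstepspec p.1 p.2⟩) n
  have hslen : ∀ n, (s n).1.length = n := by
    intro n
    induction n with
    | zero => rfl
    | succ n ih => show ((s n).1 ++ _).length = n + 1; simp [ih]
  set x : ℕ → ℕ := fun i => step (s i).1 (s i).2 with hx
  have hssucc : ∀ n, (s (n + 1)).1 = (s n).1 ++ [x n] := fun n => rfl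
  have hinit : ∀ k, initSeg x k = (s k).1 := by
    intro k
    induction k with
    | zero => rfl
    | succ k ih =>
      rw [hssucc, ← ih]
      show List.ofFn _ = _
      rw [List.ofFn_succ']
      simp [initSeg, List.concat_eq_append]
  have hDall : ∀ k, D (s k).1 := fun k => hExtD _ (s k).2
  refine ⟨x, ?_, ?_⟩
  · intro k
    rw [hinit k]
    exact (hDall k).1
  · intro i
    have hd := (hDall (i + 1)).2
    have hlt : i < (s (i + 1)).1.length := by
      have := hslen (i + 1); omega
    have hle := hd i hlt
    have hget : (s (i + 1)).1.get ⟨i, hlt⟩ = x i :=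
      List.getElem_concat_length (hslen i).symm hlt
    rwa [hget] at hle
end
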